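/- Operators of the A-subgroup at opposite central charges commute: let t > 0, k ∈ ℝ, λ : [0,2π] → ℂ with Re λ, Im λ ∈ L², let α₁, α₂ ∈ C²([0,2π],ℝ) be based loops (αᵢ(0) = αᵢ(2π) = 0), and s₁, s₂ ∈ ℝ. Then pointwise on all functions f : C₀ → ℂ, ρ_{λ,k}(α₁,0,s₁) ∘ ρ_{λ,−k}(α₂,0,s₂) = ρ_{λ,−k}(α₂,0,s₂) ∘ ρ_{λ,k}(α₁,0,s₁). -/

import Mathlib

open MeasureTheory Real

/-- Extension of a function on `[0, 2π]` to `ℝ` (by `0` outside). -/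
noncomputable def pathExt (x : Set.Icc (0 : ℝ) (2 * π) → ℝ) : ℝ → ℝ :=
  fun u => if h : u ∈ Set.Icc (0 : ℝ) (2 * π) then x ⟨u, h⟩ else 0

/-- The integration-by-parts form `⟨h,x⟩ = h'(2π)x(2π) - ∫₀^{2π} x(u)h''(u) du` of the
Stieltjes integral `∫₀^{2π} h'(u) dx(u)`. -/
noncomputable def wienerPairing (h : ℝ → ℝ) (x : Set.Icc (0 : ℝ) (2 * π) → ℝ) : ℝ :=
  deriv h (2 * π) * pathExt x (2 * π)
    - ∫ u in (0 : ℝ)..(2 * π), pathExt x u * deriv (deriv h) u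

/-- The operator `ρ_{λ,k}(α, b, s)` of the centrally extended based loop group of the
`ax+b` group, acting on functionals of paths `x` on `[0,2π]`:
`(ρ_{λ,k}(α,b,s)f)(x) = e^{is} · exp(ik(α(2π)x(2π) - ∫₀^{2π} x α' du))
  · exp(-(1/(4t))∫α'² - (1/(2t))⟨α,x⟩) · exp(∫₀^{2π} λ b e^{x(u)} du) · f(x+α)`. -/
noncomputable def wienerRhoC (t k : ℝ) (lam : ℝ → ℂ) (α b : ℝ → ℝ) (s : ℝ)
    (f : (Set.Icc (0 : ℝ) (2 * π) → ℝ) → ℂ) (x : Set.Icc (0 : ℝ) (2 * π) → ℝ) : ℂ :=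
  Complex.exp (Complex.I * (s : ℂ)) *
  Complex.exp (Complex.I * (k : ℂ) *
    ((α (2 * π) * pathExt x (2 * π)
        - ∫ u in (0 : ℝ)..(2 * π), pathExt x u * deriv α u : ℝ) : ℂ)) *
  Complex.exp (((-(1 / (4 * t)) * ∫ u in (0 : ℝ)..(2 * π), (deriv α u) ^ 2)
      - (1 / (2 * t)) * wienerPairing α x : ℝ)) *
  Complex.exp (∫ u in (0 : ℝ)..(2 * π), lam u * (b u : ℂ) *
      Complex.exp ((pathExt x u : ℝ) : ℂ)) *
  f (x + fun u => α u.1)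

/-! For `b = 0` the operator `ρ_{λ,k}(α,0,s)` is multiplication by `exp E_{k,α,s}(x)`
followed by the translation `x ↦ x + α`, where `E` is affine in `x`. Commuting the two translations
therefore only changes the exponent by the increments of the two linear parts of `E`, namely by
`-ik (∫ α₂ dα₁ + ∫ α₁ dα₂) - (1/(2t)) (⟨α₂, α₁⟩ - ⟨α₁, α₂⟩)`. Integration by parts turns the
first bracket into `α₁α₂(2π) + α₁α₂(0) = 0` and both pairings into `∫ α₁' α₂'`. -/

local notation "I₀" => Set.Icc (0 : ℝ) (2 * π)

/-- The Stieltjes integral `∫₀^{2π} g dx`, after integration by parts. -/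
noncomputable def stieltjesPairing (g : ℝ → ℝ) (x : I₀ → ℝ) : ℝ :=
  g (2 * π) * pathExt x (2 * π) - ∫ u in (0 : ℝ)..(2 * π), pathExt x u * deriv g u

lemma pathExt_add (x y : I₀ → ℝ) : pathExt (x + y) = pathExt x + pathExt y := by
  funext u
  by_cases hu : u ∈ I₀ <;> simp [pathExt, hu]

lemma pathExt_restrict_of_mem (β : ℝ → ℝ) {u : ℝ} (hu : u ∈ I₀) :
    pathExt (fun v => β v.1) u = β u := by
  simp [pathExt, hu]

lemma continuousOn_pathExt {x : I₀ → ℝ} (hx : Continuous x) : ContinuousOn (pathExt x) I₀ := by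
  rw [continuousOn_iff_continuous_domRestrict]
  convert hx using 1
  funext u
  simp [pathExt]

lemma intervalIntegrable_pathExt_mul {x : I₀ → ℝ} (hx : Continuous x) {g : ℝ → ℝ}
    (hg : Continuous g) : IntervalIntegrable (fun u => pathExt x u * g u) volume 0 (2 * π) := by
  refine ContinuousOn.intervalIntegrable ?_
  rw [Set.uIcc_of_le two_pi_pos.le]
  exact (continuousOn_pathExt hx).mul hg.continuousOn

lemma stieltjesPairing_add {g : ℝ → ℝ} (hg : Continuous (deriv g)) {x y : I₀ → ℝ}
    (hx : Continuous x) (hy : Continuous y) :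
    stieltjesPairing g (x + y) = stieltjesPairing g x + stieltjesPairing g y := by
  have hsplit := intervalIntegral.integral_add (intervalIntegrable_pathExt_mul hx hg)
    (intervalIntegrable_pathExt_mul hy hg)
  simp only [stieltjesPairing, pathExt_add, Pi.add_apply, add_mul, hsplit]
  ring

lemma integral_mul_deriv_eq_deriv_mul_of_contDiff {g β : ℝ → ℝ} (hg : ContDiff ℝ 1 g)
    (hβ : ContDiff ℝ 1 β) (a b : ℝ) :
    ∫ u in a..b, g u * deriv β u = g b * β b - g a * β a - ∫ u in a..b, deriv g u * β u :=
  intervalIntegral.integral_mul_deriv_eq_deriv_mul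
    (fun u _ => (hg.differentiable one_ne_zero u).hasDerivAt)
    (fun u _ => (hβ.differentiable one_ne_zero u).hasDerivAt)
    ((hg.continuous_deriv le_rfl).intervalIntegrable _ _)
    ((hβ.continuous_deriv le_rfl).intervalIntegrable _ _)

lemma stieltjesPairing_restrict {g β : ℝ → ℝ} (hg : ContDiff ℝ 1 g) (hβ : ContDiff ℝ 1 β) :
    stieltjesPairing g (fun v => β v.1) = g 0 * β 0 + ∫ u in (0 : ℝ)..(2 * π), g u * deriv β u := by
  have hrestrict : ∫ u in (0 : ℝ)..(2 * π), pathExt (fun v => β v.1) u * deriv g u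
      = ∫ u in (0 : ℝ)..(2 * π), deriv g u * β u := by
    refine intervalIntegral.integral_congr fun u hu => ?_
    rw [Set.uIcc_of_le two_pi_pos.le] at hu
    simp only [pathExt_restrict_of_mem β hu, mul_comm]
  rw [stieltjesPairing, pathExt_restrict_of_mem β ⟨two_pi_pos.le, le_rfl⟩, hrestrict,
    integral_mul_deriv_eq_deriv_mul_of_contDiff hg hβ]
  ring

lemma stieltjesPairing_restrict_add_comm {g β : ℝ → ℝ} (hg : ContDiff ℝ 1 g)
    (hβ : ContDiff ℝ 1 β) :
    stieltjesPairing g (fun v => β v.1) + stieltjesPairing β (fun v => g v.1)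
      = g (2 * π) * β (2 * π) + g 0 * β 0 := by
  have hparts := integral_mul_deriv_eq_deriv_mul_of_contDiff hg hβ 0 (2 * π)
  simp only [mul_comm (deriv g _)] at hparts
  rw [stieltjesPairing_restrict hg hβ, stieltjesPairing_restrict hβ hg, hparts]
  ring

lemma wienerPairing_eq_stieltjesPairing_deriv (h : ℝ → ℝ) (x : I₀ → ℝ) :
    wienerPairing h x = stieltjesPairing (deriv h) x :=
  rfl

lemma wienerPairing_restrict_comm {α₁ α₂ : ℝ → ℝ} (hα₁ : ContDiff ℝ 2 α₁)
    (hα₂ : ContDiff ℝ 2 α₂) (hα₁0 : α₁ 0 = 0) (hα₂0 : α₂ 0 = 0) :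
    wienerPairing α₂ (fun v => α₁ v.1) = wienerPairing α₁ (fun v => α₂ v.1) := by
  rw [wienerPairing_eq_stieltjesPairing_deriv, wienerPairing_eq_stieltjesPairing_deriv,
    stieltjesPairing_restrict (hα₂.deriv' (n := 1)) (hα₁.of_le one_le_two),
    stieltjesPairing_restrict (hα₁.deriv' (n := 1)) (hα₂.of_le one_le_two)]
  simp only [hα₁0, hα₂0, mul_zero, zero_mul, zero_add, mul_comm (deriv α₂ _)]

noncomputable def wienerExponent (t k : ℝ) (α : ℝ → ℝ) (s : ℝ) (x : I₀ → ℝ) : ℂ :=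
  Complex.I * s + Complex.I * k * (stieltjesPairing α x : ℂ)
    + ((-(1 / (4 * t)) * ∫ u in (0 : ℝ)..(2 * π), (deriv α u) ^ 2)
      - (1 / (2 * t)) * wienerPairing α x : ℝ)

lemma wienerRhoC_const_zero (t k : ℝ) (lam : ℝ → ℂ) (α : ℝ → ℝ) (s : ℝ) (f : (I₀ → ℝ) → ℂ)
    (x : I₀ → ℝ) :
    wienerRhoC t k lam α (fun _ => 0) s f x
      = Complex.exp (wienerExponent t k α s x) * f (x + fun u => α u.1) := by
  simp only [wienerRhoC, wienerExponent, stieltjesPairing, Complex.exp_add, Complex.ofReal_zero,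
    mul_zero, zero_mul, intervalIntegral.integral_zero, Complex.exp_zero, mul_one]

lemma wienerExponent_add {α : ℝ → ℝ} (hα : ContDiff ℝ 2 α) (t k s : ℝ) {x y : I₀ → ℝ}
    (hx : Continuous x) (hy : Continuous y) :
    wienerExponent t k α s (x + y) = wienerExponent t k α s x
      + Complex.I * k * (stieltjesPairing α y : ℂ) - (1 / (2 * t) * wienerPairing α y : ℝ) := by
  have hphase := stieltjesPairing_add (hα.continuous_deriv one_le_two) hx hy
  have hpairing := stieltjesPairing_add ((hα.deriv' (n := 1)).continuous_deriv le_rfl) hx hy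
  simp only [wienerExponent, wienerPairing_eq_stieltjesPairing_deriv, hphase, hpairing]
  push_cast
  ring

lemma wienerExponent_add_restrict_comm (t k s₁ s₂ : ℝ) {α₁ α₂ : ℝ → ℝ}
    (hα₁ : ContDiff ℝ 2 α₁) (hα₂ : ContDiff ℝ 2 α₂) (hα₁0 : α₁ 0 = 0) (hα₂0 : α₂ 0 = 0)
    (hα₁l : α₁ (2 * π) = 0) {x : I₀ → ℝ} (hx : Continuous x) :
    wienerExponent t k α₁ s₁ x + wienerExponent t (-k) α₂ s₂ (x + fun u => α₁ u.1)
      = wienerExponent t (-k) α₂ s₂ x + wienerExponent t k α₁ s₁ (x + fun u => α₂ u.1) := by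
  have hphase := stieltjesPairing_restrict_add_comm (hα₂.of_le one_le_two)
    (hα₁.of_le one_le_two)
  rw [hα₁l, hα₁0, mul_zero, mul_zero, add_zero] at hphase
  have hpairing := wienerPairing_restrict_comm hα₁ hα₂ hα₁0 hα₂0
  rw [wienerExponent_add hα₂ t (-k) s₂ hx (by fun_prop),
    wienerExponent_add hα₁ t k s₁ hx (by fun_prop), hpairing]
  have hphaseC := congrArg Complex.ofReal hphase
  push_cast at hphaseC ⊢
  linear_combination (-Complex.I * k) * hphaseC

/-- Operators of the `A`-subgroup at opposite central charges commute:
`ρ_{λ,k}(α₁,0,s₁) ∘ ρ_{λ,-k}(α₂,0,s₂) = ρ_{λ,-k}(α₂,0,s₂) ∘ ρ_{λ,k}(α₁,0,s₁)`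
pointwise on all functionals `f : C₀ → ℂ` (evaluated at points of `C₀`). -/
theorem wienerRhoC_A_subgroup_commute (t k : ℝ) (lam : ℝ → ℂ)
    (α₁ α₂ : ℝ → ℝ) (hα₁ : ContDiff ℝ 2 α₁) (hα₂ : ContDiff ℝ 2 α₂)
    (hα₁0 : α₁ 0 = 0) (hα₂0 : α₂ 0 = 0)
    (hα₁l : α₁ (2 * π) = 0) (s₁ s₂ : ℝ)
    (f : (Set.Icc (0 : ℝ) (2 * π) → ℝ) → ℂ)
    (x : Set.Icc (0 : ℝ) (2 * π) → ℝ) (hx : Continuous x) :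
    wienerRhoC t k lam α₁ (fun _ => 0) s₁ (wienerRhoC t (-k) lam α₂ (fun _ => 0) s₂ f) x
      = wienerRhoC t (-k) lam α₂ (fun _ => 0) s₂
          (wienerRhoC t k lam α₁ (fun _ => 0) s₁ f) x := by
  simp only [wienerRhoC_const_zero, ← mul_assoc, ← Complex.exp_add]
  rw [wienerExponent_add_restrict_comm t k s₁ s₂ hα₁ hα₂ hα₁0 hα₂0 hα₁l hx,
    add_right_comm x]
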